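/- Let N be divisible by 6, let w be metric weights on a finite set 𝒩 of N points, and let M* be a maximum-weight perfect matching of 𝒩. Let M_0 be any matching of N/3 edges with w(M_0) ≥ (1/2)·w(M*) (for instance, a greedy N/3-matching), let Top be the set of 2N/3 points covered by M_0, and let B = 𝒩 ∖ Top be the N/3 uncovered points. Then (3/4)·w(M_0) + (3/(2N))·Σ_{ {x,y} ⊆ B } w(x,y) + (3/(4N))·Σ_{ x ∈ Top, y ∈ B } w(x,y) ≥ (5/8)·w(M*). (This quantity equals the expected weight of the matching output by the randomized algorithm that returns, each with probability 1/2, either M_0 completed by a uniformly random perfect matching on B, or a uniformly random half of M_0 completed by a random bipartite matching to B; hence that ordinal algorithm is a 1.6-approximation for Maximum Weighted Matching.) -/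

import Mathlib

/-- A matching given as a list of `k` edges: each edge has distinct endpoints and
different edges are vertex-disjoint. -/
def IsMatching {V : Type*} {k : ℕ} (f : Fin k → V × V) : Prop :=
  (∀ i, (f i).1 ≠ (f i).2) ∧
  ∀ i j, i ≠ j →
    (f i).1 ≠ (f j).1 ∧ (f i).1 ≠ (f j).2 ∧ (f i).2 ≠ (f j).1 ∧ (f i).2 ≠ (f j).2

/-- The weight of a matching: the sum of the weights of its edges. -/
def mWeight {V : Type*} {k : ℕ} (w : V → V → ℝ) (f : Fin k → V × V) : ℝ :=
  ∑ i, w (f i).1 (f i).2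

/-!
Write `T = ∑ₓ w(x, σ* x) = 2·w(M*)` and `B` for the `N/3` unmatched points. For every `x` and
every `z ∈ B` the triangle inequality through `z` gives `w(x, σ* x) ≤ w(x, z) + w(σ* x, z)`, where
a term with `z ∈ {x, σ* x}` is simply dropped. Summing over `z ∈ B` and then over `x` yields
`(N/3)·T ≤ 2·∑ₓ ∑_{z ∈ B, z ≠ x} w(x, z) = 2·(Σ_{Top×B} + 2·Σ_{{x,y}⊆B})`, so the two averaged
terms of the left side add up to at least `T/8 = w(M*)/4`, while `(3/4)·w(M₀) ≥ (3/8)·w(M*)`.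
-/

open Finset

theorem IsMatching.card_covered {V : Type*} [Fintype V] [DecidableEq V] {k : ℕ}
    {f : Fin k → V × V} (hf : IsMatching f) :
    #(univ.filter fun v => ∃ i, v = (f i).1 ∨ v = (f i).2) = 2 * k := by
  have hinj : Function.Injective (Sum.elim (fun i => (f i).1) (fun i => (f i).2)) := by
    refine Function.Injective.sumElim (fun i j h => ?_) (fun i j h => ?_) (fun i j h => ?_)
    · by_contra hij
      exact (hf.2 i j hij).1 h
    · by_contra hij
      exact (hf.2 i j hij).2.2.2 h
    · obtain rfl | hij := eq_or_ne i j
      exacts [hf.1 i h, (hf.2 i j hij).2.1 h]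
  have himage : (univ.filter fun v => ∃ i, v = (f i).1 ∨ v = (f i).2) =
      univ.image (Sum.elim (fun i => (f i).1) (fun i => (f i).2)) := by
    ext v
    simp [eq_comm, exists_or]
  rw [himage, card_image_of_injective _ hinj, card_univ, Fintype.card_sum, Fintype.card_fin]
  ring

section Sums

variable {V M : Type*} [DecidableEq V] [AddCommMonoid M]

theorem Finset.sum_offDiag_eq_sum_sum_erase (s : Finset V) (g : V → V → M) :
    ∑ p ∈ s.offDiag, g p.1 p.2 = ∑ x ∈ s, ∑ y ∈ s.erase x, g x y :=
  sum_finset_product' _ _ _ fun p => by simp [mem_offDiag, and_comm, ne_comm]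

theorem Finset.sum_sum_erase_compl [Fintype V] (s : Finset V) (g : V → V → M) :
    ∑ x, ∑ y ∈ sᶜ.erase x, g x y =
      ∑ x ∈ s, ∑ y ∈ sᶜ, g x y + ∑ p ∈ sᶜ.offDiag, g p.1 p.2 := by
  rw [sum_offDiag_eq_sum_sum_erase, ← sum_add_sum_compl s]
  congr 1
  exact sum_congr rfl fun x hx => by rw [erase_eq_of_notMem (by simpa using hx)]

end Sums

section Triangle

variable {V : Type*} [DecidableEq V] {w : V → V → ℝ}

theorem card_mul_le_sum_erase_add_sum_erase (hsymm : ∀ x y, w x y = w y x)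
    (hmetric : ∀ x y z, x ≠ y → y ≠ z → x ≠ z → w x y ≤ w x z + w z y)
    (B : Finset V) {x y : V} (hxy : x ≠ y) :
    #B * w x y ≤ ∑ z ∈ B.erase x, w x z + ∑ z ∈ B.erase y, w y z := by
  have hvia :
      ∀ z ∈ B, w x y ≤ (if z ≠ x then w x z else 0) + (if z ≠ y then w y z else 0) := by
    intro z _
    obtain rfl | hzx := eq_or_ne z x
    · simp [hxy, hsymm z y]
    obtain rfl | hzy := eq_or_ne z y
    · simp [hzx]
    simpa [hzx, hzy, hsymm z y] using hmetric x y z hxy hzy.symm hzx.symm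
  calc #B * w x y = ∑ _z ∈ B, w x y := by rw [sum_const, nsmul_eq_mul]
    _ ≤ _ := sum_le_sum hvia
    _ = _ := by rw [sum_add_distrib, ← sum_filter, ← sum_filter, filter_ne', filter_ne']

theorem card_mul_sum_le_two_mul_sum_sum_erase [Fintype V] (hsymm : ∀ x y, w x y = w y x)
    (hmetric : ∀ x y z, x ≠ y → y ≠ z → x ≠ z → w x y ≤ w x z + w z y)
    (B : Finset V) (σ : Equiv.Perm V) (hσ : ∀ x, σ x ≠ x) :
    #B * ∑ x, w x (σ x) ≤ 2 * ∑ x, ∑ z ∈ B.erase x, w x z :=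
  calc #B * ∑ x, w x (σ x) = ∑ x, #B * w x (σ x) := mul_sum _ _ _
    _ ≤ ∑ x, (∑ z ∈ B.erase x, w x z + ∑ z ∈ B.erase (σ x), w (σ x) z) :=
      sum_le_sum fun x _ => card_mul_le_sum_erase_add_sum_erase hsymm hmetric B (hσ x).symm
    _ = 2 * ∑ x, ∑ z ∈ B.erase x, w x z := by
      rw [sum_add_distrib, Equiv.sum_comp σ fun x => ∑ z ∈ B.erase x, w x z]
      ring

end Triangle

theorem stmt_12_general (m N : ℕ) (hN : N = 6 * m)
    (w : Fin N → Fin N → ℝ)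
    (hsymm : ∀ x y, w x y = w y x)
    (hmetric : ∀ x y z : Fin N, x ≠ y → y ≠ z → x ≠ z → w x y ≤ w x z + w z y)
    (σstar : Equiv.Perm (Fin N))
    (hfix : ∀ x, σstar x ≠ x)
    (f : Fin (2 * m) → Fin N × Fin N) (hf : IsMatching f)
    (hhalf : (1 / 2) * ((∑ x, w x (σstar x)) / 2) ≤ mWeight w f) :
    (3 / 4) * mWeight w f
      + (3 / (2 * (N : ℝ))) *
          ((∑ p ∈ ((Finset.univ.filter
              (fun v : Fin N => ∃ i, v = (f i).1 ∨ v = (f i).2))ᶜ).offDiag,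
            w p.1 p.2) / 2)
      + (3 / (4 * (N : ℝ))) *
          (∑ x ∈ Finset.univ.filter (fun v : Fin N => ∃ i, v = (f i).1 ∨ v = (f i).2),
            ∑ y ∈ (Finset.univ.filter
              (fun v : Fin N => ∃ i, v = (f i).1 ∨ v = (f i).2))ᶜ,
              w x y)
      ≥ (5 / 8) * ((∑ x, w x (σstar x)) / 2) := by
  subst hN
  set Top := univ.filter fun v : Fin (6 * m) => ∃ i, v = (f i).1 ∨ v = (f i).2
  set T := ∑ x, w x (σstar x)
  set D := ∑ p ∈ Topᶜ.offDiag, w p.1 p.2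
  set S := ∑ x ∈ Top, ∑ y ∈ Topᶜ, w x y
  rcases m.eq_zero_or_pos with rfl | hm
  · simp [T] at hhalf ⊢
    linarith
  have hcardB : #Topᶜ = 2 * m := by
    rw [card_compl, hf.card_covered, Fintype.card_fin]
    omega
  have hkey : m * T ≤ S + D := by
    have := card_mul_sum_le_two_mul_sum_sum_erase hsymm hmetric Topᶜ σstar hfix
    rw [hcardB, sum_sum_erase_compl] at this
    push_cast at this
    linarith
  have hcross :
      T / 8 ≤ 3 / (2 * ((6 * m : ℕ) : ℝ)) * (D / 2) + 3 / (4 * ((6 * m : ℕ) : ℝ)) * S := by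
    have : (0 : ℝ) < m := by exact_mod_cast hm
    push_cast
    field_simp
    linarith
  linarith

/-- `N = 6m`, metric weights `w`, `σ*` a maximum-weight perfect matching
(fixed-point-free involution), `f` a matching of `N/3 = 2m` edges with
`w(M₀) ≥ (1/2)·w(M*)`, `Top` the set of covered points and `B = Topᶜ`.  Then
`(3/4)·w(M₀) + (3/(2N))·Σ_{{x,y}⊆B} w + (3/(4N))·Σ_{x∈Top,y∈B} w ≥ (5/8)·w(M*)`. -/
theorem stmt_12 (m N : ℕ) (hN : N = 6 * m)
    (w : Fin N → Fin N → ℝ)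
    (hnonneg : ∀ x y, 0 ≤ w x y)
    (hsymm : ∀ x y, w x y = w y x)
    (hmetric : ∀ x y z : Fin N, x ≠ y → y ≠ z → x ≠ z → w x y ≤ w x z + w z y)
    (σstar : Equiv.Perm (Fin N))
    (hinv : ∀ x, σstar (σstar x) = x) (hfix : ∀ x, σstar x ≠ x)
    (hmax : ∀ σ : Equiv.Perm (Fin N), (∀ x, σ (σ x) = x) → (∀ x, σ x ≠ x) →
      (∑ x, w x (σ x)) / 2 ≤ (∑ x, w x (σstar x)) / 2)
    (f : Fin (2 * m) → Fin N × Fin N) (hf : IsMatching f)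
    (hhalf : (1 / 2) * ((∑ x, w x (σstar x)) / 2) ≤ mWeight w f) :
    (3 / 4) * mWeight w f
      + (3 / (2 * (N : ℝ))) *
          ((∑ p ∈ ((Finset.univ.filter
              (fun v : Fin N => ∃ i, v = (f i).1 ∨ v = (f i).2))ᶜ).offDiag,
            w p.1 p.2) / 2)
      + (3 / (4 * (N : ℝ))) *
          (∑ x ∈ Finset.univ.filter (fun v : Fin N => ∃ i, v = (f i).1 ∨ v = (f i).2),
            ∑ y ∈ (Finset.univ.filter
              (fun v : Fin N => ∃ i, v = (f i).1 ∨ v = (f i).2))ᶜ,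
              w x y)
      ≥ (5 / 8) * ((∑ x, w x (σstar x)) / 2) :=
  stmt_12_general m N hN w hsymm hmetric σstar hfix f hf hhalf
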